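/- arXiv:1011.4441 — 4 statements merged into one kernel-verified Lean document; each statement's English description precedes it below -/
import Mathlib

section
/- Let α, β, γ be complex numbers and ε ∈ {1, -1}. Then λ is an eigenvalue of the matrix L₁ = [[0, α, β], [γ, 0, 0], [0, β, εα]] if and only if ελ is an eigenvalue of the matrix L₂ = [[0, α, β], [γ, 0, 0], [0, εβ, α]]. -/
/-!
With `D = diag(1, ε, ε)` one has `D * D = 1` and `D * L₁ * D = ε • L₂` because `ε² = 1`;
so `v ↦ D v` carries the `λ`-eigenvectors of `L₁` to the `ελ`-eigenvectors of `L₂`.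
-/

open Matrix

namespace Matrix

variable {n R : Type*} [Fintype n] [DecidableEq n] [CommRing R]

theorem mulVec_ne_zero_of_mul_self_eq_one {P : Matrix n n R} (hP : P * P = 1) {v : n → R}
    (hv : v ≠ 0) : P *ᵥ v ≠ 0 := by
  intro h
  apply hv
  rw [← one_mulVec v, ← hP, ← mulVec_mulVec, h, mulVec_zero]

theorem mulVec_eq_smul_of_mul_mul_eq_smul {P A B : Matrix n n R} {c μ : R}
    (hP : P * P = 1) (hc : c * c = 1) (h : P * A * P = c • B) {v : n → R}
    (hv : A *ᵥ v = μ • v) : B *ᵥ (P *ᵥ v) = (c * μ) • (P *ᵥ v) :=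
  calc B *ᵥ (P *ᵥ v) = (c • (P * A * P)) *ᵥ (P *ᵥ v) := by rw [h, smul_smul, hc, one_smul]
    _ = c • (P *ᵥ (A *ᵥ v)) := by
      rw [smul_mulVec, mulVec_mulVec, Matrix.mul_assoc, hP, Matrix.mul_one, mulVec_mulVec]
    _ = (c * μ) • (P *ᵥ v) := by rw [hv, mulVec_smul, smul_smul]

theorem mul_mul_eq_smul_symm {P A B : Matrix n n R} {c : R}
    (hP : P * P = 1) (hc : c * c = 1) (h : P * A * P = c • B) : P * B * P = c • A := by
  have hA : A = P * (P * A * P) * P := by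
    simp only [← Matrix.mul_assoc, hP, Matrix.one_mul]
    rw [Matrix.mul_assoc, hP, Matrix.mul_one]
  rw [hA, h, Matrix.mul_smul, Matrix.smul_mul, smul_smul, hc, one_smul]

theorem exists_mulVec_eq_smul_iff_of_mul_mul_eq_smul {P A B : Matrix n n R} {c : R}
    (hP : P * P = 1) (hc : c * c = 1) (h : P * A * P = c • B) (μ : R) :
    (∃ v : n → R, v ≠ 0 ∧ A *ᵥ v = μ • v) ↔ (∃ w : n → R, w ≠ 0 ∧ B *ᵥ w = (c * μ) • w) := by
  constructor
  · rintro ⟨v, hv0, hv⟩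
    exact ⟨P *ᵥ v, mulVec_ne_zero_of_mul_self_eq_one hP hv0,
      mulVec_eq_smul_of_mul_mul_eq_smul hP hc h hv⟩
  · rintro ⟨w, hw0, hw⟩
    refine ⟨P *ᵥ w, mulVec_ne_zero_of_mul_self_eq_one hP hw0, ?_⟩
    rw [mulVec_eq_smul_of_mul_mul_eq_smul hP hc (mul_mul_eq_smul_symm hP hc h) hw,
      ← mul_assoc, hc, one_mul]

end Matrix

theorem eigenvalue_L1_iff_L2 (α β γ ε lam : ℂ) (hε : ε = 1 ∨ ε = -1) :
    (∃ v : Fin 3 → ℂ, v ≠ 0 ∧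
        (Matrix.of ![![0, α, β], ![γ, 0, 0], ![0, β, ε * α]]).mulVec v = lam • v) ↔
    (∃ v : Fin 3 → ℂ, v ≠ 0 ∧
        (Matrix.of ![![0, α, β], ![γ, 0, 0], ![0, ε * β, α]]).mulVec v = (ε * lam) • v) := by
  have hε2 : ε * ε = 1 := by rcases hε with rfl | rfl <;> norm_num
  set D : Matrix (Fin 3) (Fin 3) ℂ := diagonal ![1, ε, ε]
  have hD : D * D = 1 := by
    rw [diagonal_mul_diagonal, ← diagonal_one]
    congr 1
    ext i; fin_cases i <;> simp [hε2]
  refine exists_mulVec_eq_smul_iff_of_mul_mul_eq_smul hD hε2 ?_ lam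
  ext i j
  fin_cases i <;> fin_cases j <;> simp [D] <;> grind
end

section
/- Let α, β, γ be complex numbers, ε ∈ {1, -1}, L₁ = [[0, α, β], [γ, 0, 0], [0, β, εα]] and L₂ = [[0, α, β], [γ, 0, 0], [0, εβ, α]]. Then for all natural numbers n, trace(L₁ⁿ) = εⁿ · trace(L₂ⁿ). -/
/-!
With `D = diag(ε, 1, 1)` and `ε² = 1`, one checks `L₁ = ε • (D L₂ D)`. Since `D` is an involution,
`(D L₂ D)ⁿ = D L₂ⁿ D`, which has the same trace as `L₂ⁿ`; hence `trace (L₁ⁿ) = εⁿ trace (L₂ⁿ)`.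
-/

open Matrix

theorem pow_conj_of_mul_self_eq_one {M : Type*} [Monoid M] {d : M} (hd : d * d = 1) (a : M)
    (n : ℕ) : (d * a * d) ^ n = d * a ^ n * d :=
  Units.conj_pow ⟨d, d, hd, hd⟩ a n

theorem Matrix.trace_pow_smul_conj_of_mul_self_eq_one {m R : Type*} [Fintype m] [DecidableEq m]
    [CommSemiring R] {D : Matrix m m R} (hD : D * D = 1) (c : R) (A : Matrix m m R) (n : ℕ) :
    trace ((c • (D * A * D)) ^ n) = c ^ n * trace (A ^ n) := by
  rw [smul_pow, trace_smul, pow_conj_of_mul_self_eq_one hD, trace_mul_cycle, hD, one_mul,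
    smul_eq_mul]

theorem L1_eq_smul_diagonal_conj_L2 {R : Type*} [CommRing R] {α β γ ε : R}
    (hε : ε * ε = 1) :
    Matrix.of ![![0, α, β], ![γ, 0, 0], ![0, β, ε * α]] =
      ε • (diagonal ![ε, 1, 1] * Matrix.of ![![0, α, β], ![γ, 0, 0], ![0, ε * β, α]] *
        diagonal ![ε, 1, 1]) := by
  ext i j
  fin_cases i <;> fin_cases j <;> simp [diagonal_mul, mul_diagonal] <;> grind

theorem trace_pow_L1_eq_sign_mul_trace_pow_L2 (α β γ ε : ℂ) (hε : ε = 1 ∨ ε = -1) (n : ℕ) :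
    Matrix.trace ((Matrix.of ![![0, α, β], ![γ, 0, 0], ![0, β, ε * α]]) ^ n) =
      ε ^ n * Matrix.trace ((Matrix.of ![![0, α, β], ![γ, 0, 0], ![0, ε * β, α]]) ^ n) := by
  have hεε : ε * ε = 1 := by rcases hε with rfl | rfl <;> norm_num
  have hD : diagonal ![ε, 1, 1] * diagonal ![ε, 1, 1] = 1 := by
    rw [diagonal_mul_diagonal, ← diagonal_one]
    congr 1
    ext i
    fin_cases i <;> simp [hεε]
  rw [L1_eq_smul_diagonal_conj_L2 hεε, trace_pow_smul_conj_of_mul_self_eq_one hD]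
end

section
/- A positive integer k divides 24 if and only if for all integers a and d, a·d ≡ 1 (mod k) implies a ≡ d (mod k). -/
/-!
The condition says that every unit of `ZMod k` is its own inverse, i.e. that the exponent of
`(ZMod k)ˣ` divides `2`. This holds for `k = 24`, hence for its divisors, since `(ZMod 24)ˣ`
surjects onto `(ZMod k)ˣ`. Conversely it fails for `k = 5` (as `2 * 3 = 1` there), hence for
multiples of `5`; and if `5` is coprime to `k`, then `5 ^ 2 = 1` in `ZMod k`, i.e. `k ∣ 24`.
-/

theorem Monoid.exponent_units_dvd_two_iff {M : Type*} [CommMonoid M] :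
    Monoid.exponent Mˣ ∣ 2 ↔ ∀ a b : M, a * b = 1 → a = b := by
  rw [Monoid.exponent_dvd_iff_forall_pow_eq_one]
  constructor
  · intro h a b hab
    have hu := h (Units.mkOfMulEqOne a b hab)
    rw [pow_two, mul_eq_one_iff_eq_inv] at hu
    exact congr_arg Units.val hu
  · intro h u
    rw [pow_two, mul_eq_one_iff_eq_inv]
    exact Units.ext (h u ↑u⁻¹ u.mul_inv)

theorem ZMod.exponent_units_dvd_of_dvd {m n : ℕ} [NeZero n] (h : m ∣ n) :
    Monoid.exponent (ZMod m)ˣ ∣ Monoid.exponent (ZMod n)ˣ :=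
  MonoidHom.exponent_dvd (ZMod.unitsMap_surjective h)

theorem ZMod.forall_mul_eq_one_imp_eq_iff (n : ℕ) :
    (∀ a b : ZMod n, a * b = 1 → a = b) ↔
      ∀ a b : ℤ, a * b ≡ 1 [ZMOD n] → a ≡ b [ZMOD n] := by
  simp only [← ZMod.intCast_eq_intCast_iff, Int.cast_mul, Int.cast_one]
  exact ZMod.intCast_surjective.forall₂

theorem ZMod.exponent_units_twentyFour_dvd_two : Monoid.exponent (ZMod 24)ˣ ∣ 2 :=
  Monoid.exponent_units_dvd_two_iff.mpr (by decide)

theorem ZMod.not_exponent_units_five_dvd_two : ¬ Monoid.exponent (ZMod 5)ˣ ∣ 2 :=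
  Monoid.exponent_units_dvd_two_iff.not.mpr (by decide)

theorem ZMod.sq_modEq_one_of_exponent_units_dvd_two {k x : ℕ} (hx : x.Coprime k)
    (h : Monoid.exponent (ZMod k)ˣ ∣ 2) : x ^ 2 ≡ 1 [MOD k] := by
  have hu := Monoid.exponent_dvd_iff_forall_pow_eq_one.mp h (ZMod.unitOfCoprime x hx)
  rw [← ZMod.natCast_eq_natCast_iff]
  simpa using congr_arg Units.val hu

theorem divides_24_iff_mul_inverse_congruent (k : ℕ) (hk : 0 < k) :
    k ∣ 24 ↔ ∀ a d : ℤ, a * d ≡ 1 [ZMOD (k : ℤ)] → a ≡ d [ZMOD (k : ℤ)] := by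
  have : NeZero k := ⟨hk.ne'⟩
  rw [← ZMod.forall_mul_eq_one_imp_eq_iff, ← Monoid.exponent_units_dvd_two_iff]
  refine ⟨fun h24 ↦ (ZMod.exponent_units_dvd_of_dvd h24).trans
    ZMod.exponent_units_twentyFour_dvd_two, fun h ↦ ?_⟩
  by_cases h5 : 5 ∣ k
  · exact absurd ((ZMod.exponent_units_dvd_of_dvd h5).trans h)
      ZMod.not_exponent_units_five_dvd_two
  · have h5k : Nat.Coprime 5 k := (Nat.Prime.coprime_iff_not_dvd Nat.prime_five).mpr h5
    exact (Nat.modEq_iff_dvd' (by norm_num)).mp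
      (ZMod.sq_modEq_one_of_exponent_units_dvd_two h5k h).symm
end

section
/- The index of Γ₀(N) in SL(2,ℤ) is the multiplicative function μ_N = N·∏_{p | N}(1 + 1/p), where the product runs over the prime divisors of N. -/
/-!
Through reduction mod `N`, `SL(2, ℤ)` acts on column vectors in `(ℤ/N)²`. The orbit of `(1, 0)`
consists of all coprime pairs, because such a pair lifts to a coprime pair of integers, which is
the first column of a matrix in `SL(2, ℤ)`; its stabilizer is `Γ₁(N)`. So `[SL(2, ℤ) : Γ₁(N)]` is
the number `J(N)` of coprime pairs in `(ℤ/N)²`. The lower right entry maps `Γ₀(N)` onto `(ℤ/N)ˣ`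
with kernel `Γ₁(N)`, so `[Γ₀(N) : Γ₁(N)] = φ(N)`.

By the Chinese remainder theorem `J` is multiplicative. Since `ℤ/p^k` is a local ring, a pair is
coprime there iff one of its entries is a unit, so `J(p^k) = p^(2k) - p^(2k-2)`. Hence
`J(N) = N² ∏ (1 - p⁻²)`, and dividing by `φ(N) = N ∏ (1 - p⁻¹)` gives the index of `Γ₀(N)`.
-/

open Matrix
open scoped MatrixGroups

theorem Nat.exists_coprime_add_mul {x n m : ℕ} (hm : m ≠ 0) (h : (x.gcd n).Coprime m) :
    ∃ k : ℕ, (x + k * n).Coprime m := by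
  -- each prime of `m` then divides exactly one of `x` and `k * n`
  refine ⟨∏ p ∈ m.primeFactors with ¬p ∣ x, p, Nat.coprime_of_dvd fun p hp hpx hpm ↦ ?_⟩
  by_cases hpx' : p ∣ x
  · have hpkn := (Nat.dvd_add_right hpx').mp hpx
    rcases hp.dvd_mul.mp hpkn with hpk | hpn
    · obtain ⟨q, hq, hpq⟩ := (hp.prime.dvd_finsetProd_iff _).mp hpk
      rw [Finset.mem_filter, Nat.mem_primeFactors] at hq
      exact hq.2 ((Nat.prime_dvd_prime_iff_eq hp hq.1.1).mp hpq ▸ hpx')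
    · exact Nat.Prime.not_coprime_iff_dvd.mpr ⟨p, hp, Nat.dvd_gcd hpx' hpn, hpm⟩ h
  · have hpk : p ∣ (∏ p ∈ m.primeFactors with ¬p ∣ x, p) * n :=
      (Finset.dvd_prod_of_mem _ (by simp [hp, hpm, hm, hpx'])).mul_right n
    exact hpx' ((Nat.dvd_add_left hpk).mp hpx)

theorem ZMod.exists_isCoprime_lift {N : ℕ} (hN : N ≠ 0) {a b : ZMod N} (h : IsCoprime a b) :
    ∃ c d : ℤ, IsCoprime c d ∧ (c : ZMod N) = a ∧ (d : ZMod N) = b := by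
  have : NeZero N := ⟨hN⟩
  -- not `a.val`, which vanishes when `a = 0`: `Nat.exists_coprime_add_mul` needs `m ≠ 0`
  set m := a.val + N
  have hma : (m : ZMod N) = a := by simp [m]
  have hgcd : (b.val.gcd N).Coprime m := by
    set d := (b.val.gcd N).gcd m
    have hdN : d ∣ N := (Nat.gcd_dvd_left _ _).trans (Nat.gcd_dvd_right _ _)
    -- `a` and `b` both vanish in `ZMod d`, so their coprimality there forces `d = 1`
    have hd := h.map (ZMod.castHom hdN (ZMod d))
    rw [← hma, ← ZMod.natCast_zmod_val b, map_natCast, map_natCast,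
      (ZMod.natCast_eq_zero_iff _ _).mpr (Nat.gcd_dvd_right _ _),
      (ZMod.natCast_eq_zero_iff _ _).mpr ((Nat.gcd_dvd_left _ _).trans (Nat.gcd_dvd_left _ _)),
      isCoprime_zero_left, isUnit_zero_iff, eq_comm, ← Nat.cast_one,
      ZMod.natCast_eq_zero_iff] at hd
    exact Nat.dvd_one.mp hd
  obtain ⟨k, hk⟩ := Nat.exists_coprime_add_mul (by omega) hgcd
  refine ⟨m, (b.val + k * N : ℕ), Nat.isCoprime_iff_coprime.mpr hk.symm, by simpa using hma, ?_⟩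
  simp

def coprimePairs (R : Type*) [CommSemiring R] : Set (Fin 2 → R) := {v | IsCoprime (v 0) (v 1)}

theorem Prod.isCoprime_iff {R S : Type*} [CommSemiring R] [CommSemiring S] {x y : R × S} :
    IsCoprime x y ↔ IsCoprime x.1 y.1 ∧ IsCoprime x.2 y.2 := by
  refine ⟨fun h ↦ ⟨h.map (RingHom.fst R S), h.map (RingHom.snd R S)⟩, ?_⟩
  rintro ⟨⟨a, b, hab⟩, ⟨c, d, hcd⟩⟩
  exact ⟨(a, c), (b, d), Prod.ext hab hcd⟩

theorem card_coprimePairs_prod (R S : Type*) [CommSemiring R] [CommSemiring S] :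
    Nat.card (coprimePairs (R × S)) = Nat.card (coprimePairs R) * Nat.card (coprimePairs S) := by
  rw [← Nat.card_prod]
  refine Nat.card_congr (((Equiv.arrowProdEquivProdArrow _ _ _).subtypeEquiv fun v ↦ ?_).trans
    Equiv.subtypeProdEquivProd)
  exact Prod.isCoprime_iff

theorem card_coprimePairs_congr {R S : Type*} [CommSemiring R] [CommSemiring S] (e : R ≃+* S) :
    Nat.card (coprimePairs R) = Nat.card (coprimePairs S) :=
  Nat.card_congr <| ((Equiv.refl _).arrowCongr e.toEquiv).subtypeEquiv fun v ↦
    ⟨fun (h : IsCoprime (v 0) (v 1)) ↦ h.map (e : R →+* S),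
      fun (h : IsCoprime (e (v 0)) (e (v 1))) ↦
        show IsCoprime (v 0) (v 1) by simpa using h.map (e.symm : S →+* R)⟩

theorem IsLocalRing.isCoprime_iff {R : Type*} [CommSemiring R] [IsLocalRing R] {x y : R} :
    IsCoprime x y ↔ IsUnit x ∨ IsUnit y := by
  refine ⟨fun ⟨a, b, h⟩ ↦ ?_, ?_⟩
  · exact (isUnit_or_isUnit_of_add_one h).imp isUnit_of_mul_isUnit_right isUnit_of_mul_isUnit_right
  · rintro (h | h)
    · exact ⟨↑h.unit⁻¹, 0, by simp⟩
    · exact ⟨0, ↑h.unit⁻¹, by simp⟩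

theorem card_nonunits_add_card_units (M : Type*) [Monoid M] [Finite M] :
    Nat.card (nonunits M) + Nat.card Mˣ = Nat.card M := by
  rw [← Set.ncard_range_of_injective Units.val_injective, Nat.card_coe_set_eq, add_comm]
  exact Set.ncard_add_ncard_compl _

theorem IsLocalRing.card_coprimePairs_add_sq_card_nonunits (R : Type*) [CommSemiring R]
    [IsLocalRing R] [Finite R] :
    Nat.card (coprimePairs R) + Nat.card (nonunits R) ^ 2 = Nat.card R ^ 2 := by
  have hcompl : coprimePairs R = {v : Fin 2 → R | ∀ i, v i ∈ nonunits R}ᶜ := by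
    ext v
    simp [coprimePairs, isCoprime_iff, Fin.forall_fin_two, or_iff_not_and_not]
  have hnonunits : Nat.card {v : Fin 2 → R | ∀ i, v i ∈ nonunits R} = Nat.card (nonunits R) ^ 2 :=
    (Nat.card_congr Equiv.subtypePiEquivPi).trans (by rw [Nat.card_fun, Nat.card_fin])
  have hpairs : Nat.card (Fin 2 → R) = Nat.card R ^ 2 := by rw [Nat.card_fun, Nat.card_fin]
  rw [← hnonunits, ← hpairs, hcompl, Nat.card_coe_set_eq, Nat.card_coe_set_eq]
  exact Set.ncard_compl_add_ncard _

namespace ZMod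

variable {p k : ℕ}

theorem isUnit_prime_pow_iff_castHom_ne_zero (hp : p.Prime) (hk : k ≠ 0) (x : ZMod (p ^ k)) :
    IsUnit x ↔ castHom (dvd_pow_self p hk) (ZMod p) x ≠ 0 := by
  have : NeZero (p ^ k) := ⟨pow_ne_zero k hp.ne_zero⟩
  rw [← natCast_zmod_val x, isUnit_natCast_iff_not_dvd_pow hp (Nat.pos_of_ne_zero hk),
    map_natCast, ne_eq, natCast_eq_zero_iff]

theorem isLocalRing_prime_pow (hp : p.Prime) (hk : k ≠ 0) : IsLocalRing (ZMod (p ^ k)) := by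
  have : Nontrivial (ZMod (p ^ k)) := nontrivial_iff.mpr (Nat.one_lt_pow hk hp.one_lt).ne'
  refine IsLocalRing.of_nonunits_add fun a b ha hb ↦ ?_
  simp only [mem_nonunits_iff, isUnit_prime_pow_iff_castHom_ne_zero hp hk, not_not,
    map_add] at *
  rw [ha, hb, add_zero]

theorem card_nonunits_prime_pow (hp : p.Prime) (hk : k ≠ 0) :
    Nat.card (nonunits (ZMod (p ^ k))) = p ^ (k - 1) := by
  have : NeZero (p ^ k) := ⟨pow_ne_zero k hp.ne_zero⟩
  have hcard := card_nonunits_add_card_units (ZMod (p ^ k))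
  rw [Nat.card_eq_fintype_card (α := (ZMod (p ^ k))ˣ), card_units_eq_totient,
    Nat.totient_prime_pow hp (Nat.pos_of_ne_zero hk), Nat.card_zmod] at hcard
  have hpow : p ^ (k - 1) * (p - 1) + p ^ (k - 1) = p ^ k := by
    rw [← Nat.mul_succ, Nat.succ_eq_add_one, Nat.sub_one_add_one hp.ne_zero, ← pow_succ,
      Nat.sub_one_add_one hk]
  omega

theorem card_coprimePairs_prime_pow (hp : p.Prime) (hk : k ≠ 0) :
    Nat.card (coprimePairs (ZMod (p ^ k))) + (p ^ (k - 1)) ^ 2 = (p ^ k) ^ 2 := by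
  have : NeZero (p ^ k) := ⟨pow_ne_zero k hp.ne_zero⟩
  have := isLocalRing_prime_pow hp hk
  have h := IsLocalRing.card_coprimePairs_add_sq_card_nonunits (ZMod (p ^ k))
  rwa [card_nonunits_prime_pow hp hk, Nat.card_zmod] at h

theorem card_coprimePairs {N : ℕ} (hN : N ≠ 0) :
    (Nat.card (coprimePairs (ZMod N)) : ℚ) =
      N ^ 2 * ∏ p ∈ N.primeFactors, (1 - 1 / (p : ℚ) ^ 2) := by
  induction N using Nat.recOnPosPrimePosCoprime with
  | prime_pow p k hp hk =>
    have hcount : (Nat.card (coprimePairs (ZMod (p ^ k))) : ℚ) =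
        (p ^ k : ℚ) ^ 2 - (p ^ (k - 1)) ^ 2 := by
      rw [eq_sub_iff_add_eq]
      exact_mod_cast card_coprimePairs_prime_pow hp hk.ne'
    have hp0 : (p : ℚ) ≠ 0 := by exact_mod_cast hp.ne_zero
    rw [hcount, Nat.primeFactors_prime_pow hk.ne' hp, Finset.prod_singleton]
    obtain ⟨j, rfl⟩ : ∃ j, k = j + 1 := ⟨k - 1, by omega⟩
    push_cast
    field_simp
    ring
  | zero => exact absurd rfl hN
  | one => simp [coprimePairs, Subsingleton.elim _ (0 : ZMod 1), isCoprime_zero_left]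
  | coprime a b ha hb hab iha ihb =>
    rw [card_coprimePairs_congr (chineseRemainder hab), card_coprimePairs_prod,
      Nat.Coprime.primeFactors_mul hab, Finset.prod_union hab.disjoint_primeFactors]
    push_cast
    rw [iha (by omega), ihb (by omega)]
    ring

end ZMod

namespace CongruenceSubgroup

variable {N : ℕ}

section ColumnAction

abbrev reductionAction (N : ℕ) : MulAction SL(2, ℤ) (Fin 2 → ZMod N) :=
  MulAction.compHom _ (SpecialLinearGroup.map (Int.castRingHom (ZMod N)))

attribute [local instance] reductionAction

theorem smul_single_zero (γ : SL(2, ℤ)) :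
    γ • (Pi.single 0 1 : Fin 2 → ZMod N) = fun i ↦ (γ i 0 : ZMod N) :=
  mulVec_single_one (SpecialLinearGroup.map (Int.castRingHom (ZMod N)) γ).1 0

theorem stabilizer_single_zero :
    MulAction.stabilizer SL(2, ℤ) (Pi.single 0 1 : Fin 2 → ZMod N) = Gamma1 N := by
  ext γ
  have hdet : (γ 0 0 : ZMod N) * γ 1 1 - γ 0 1 * γ 1 0 = 1 := by
    have := congrArg (Int.cast : ℤ → ZMod N) (γ.det_coe ▸ det_fin_two γ.1)
    push_cast at this
    exact this.symm
  simp only [MulAction.mem_stabilizer_iff, smul_single_zero, funext_iff, Fin.forall_fin_two,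
    Pi.single_eq_same, Pi.single_eq_of_ne one_ne_zero, Gamma1_mem]
  constructor
  · rintro ⟨h00, h10⟩
    exact ⟨h00, by simpa [h00, h10] using hdet, h10⟩
  · exact fun ⟨h00, _, h10⟩ ↦ ⟨h00, h10⟩

theorem orbit_single_zero (hN : N ≠ 0) :
    MulAction.orbit SL(2, ℤ) (Pi.single 0 1 : Fin 2 → ZMod N) = coprimePairs (ZMod N) := by
  ext v
  constructor
  · rintro ⟨γ, rfl⟩
    simpa [coprimePairs, smul_single_zero] using
      (SpecialLinearGroup.map (Int.castRingHom (ZMod N)) γ).isCoprime_col 0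
  · intro hv
    obtain ⟨c, d, hcd, hc, hd⟩ := ZMod.exists_isCoprime_lift hN hv
    obtain ⟨γ, hγc, hγd⟩ := hcd.exists_SL2_col 0
    refine ⟨γ, ?_⟩
    ext i
    fin_cases i <;> simp [smul_single_zero, hγc, hγd, hc, hd]

theorem index_Gamma1 (hN : N ≠ 0) : (Gamma1 N).index = Nat.card (coprimePairs (ZMod N)) := by
  rw [← stabilizer_single_zero, MulAction.index_stabilizer, orbit_single_zero hN,
    Nat.card_coe_set_eq]

end ColumnAction

theorem Gamma1_subgroupOf_Gamma0 : (Gamma1 N).subgroupOf (Gamma0 N) = Gamma1' N := by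
  ext γ
  rw [Subgroup.mem_subgroupOf, Gamma1_mem, Gamma1_to_Gamma0_mem]

theorem Gamma0Map_toHomUnits_surjective (hN : N ≠ 0) :
    Function.Surjective (Gamma0Map N).toHomUnits := by
  intro u
  obtain ⟨c, d, hcd, hc, hd⟩ := ZMod.exists_isCoprime_lift hN (isCoprime_zero_left.mpr u.isUnit)
  obtain ⟨γ, hγc, hγd⟩ := hcd.exists_SL2_row 1
  refine ⟨⟨γ, by rw [Gamma0_mem, hγc, hc]⟩, Units.ext ?_⟩
  simp [Gamma0Map, hγd, hd]

theorem relIndex_Gamma1_Gamma0 (hN : N ≠ 0) : (Gamma1 N).relIndex (Gamma0 N) = N.totient := by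
  have : NeZero N := ⟨hN⟩
  rw [Subgroup.relIndex, Gamma1_subgroupOf_Gamma0, Gamma1', ← MonoidHom.ker_toHomUnits,
    Subgroup.index_ker, MonoidHom.range_eq_top.mpr (Gamma0Map_toHomUnits_surjective hN),
    Subgroup.card_top, Nat.card_eq_fintype_card, ZMod.card_units_eq_totient]

end CongruenceSubgroup

open CongruenceSubgroup

theorem gamma0_index_formula (N : ℕ) (hN : 0 < N) :
    ((Gamma0 N).index : ℚ) = N * ∏ p ∈ N.primeFactors, (1 + 1 / (p : ℚ)) := by
  have hN0 : N ≠ 0 := hN.ne'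
  have hφ : (N.totient : ℚ) ≠ 0 := by exact_mod_cast (Nat.totient_pos.mpr hN).ne'
  have hindex : (N.totient : ℚ) * (Gamma0 N).index = Nat.card (coprimePairs (ZMod N)) := by
    rw [← relIndex_Gamma1_Gamma0 hN0, ← index_Gamma1 hN0,
      ← Subgroup.relIndex_mul_index (Gamma1_in_Gamma0 N), Nat.cast_mul]
  refine mul_left_cancel₀ hφ (hindex.trans ?_)
  rw [ZMod.card_coprimePairs hN0, Nat.totient_eq_mul_prod_factors, mul_mul_mul_comm,
    ← Finset.prod_mul_distrib, ← sq]
  exact congrArg _ (Finset.prod_congr rfl fun p _ ↦ by ring)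
end
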